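/- arXiv:2411.04115 — 5 statements merged into one kernel-verified Lean document; each statement's English description precedes it below -/
import Mathlib

section
/- For any Boolean function f: {0,1}^ℓ → {0,1}, the total online influence of f is at least the variance of the ±1-valued function e(f)(x) = (-1)^{f(x)}; that is, Var(e(f)) ≤ oI[f]. -/
open Finset

def b2r (b : Bool) : ℝ := if b then 1 else 0

noncomputable def condExp {ℓ : ℕ} (f : (Fin ℓ → Bool) → Bool) (i : Fin ℓ) (p : Fin ℓ → Bool)
    (b : Bool) : ℝ :=
  (∑ x : Fin ℓ → Bool, if (∀ j, j < i → x j = p j) ∧ x i = b then b2r (f x) else 0)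
    / 2 ^ (ℓ - (i : ℕ) - 1)

/-- Online influence of coordinate `i`: the expectation over a uniform prefix of the absolute
difference of the conditional expectations of `f` with coordinate `i` set to `1` resp. `0`,
the remaining coordinates being uniform. -/
noncomputable def oI {ℓ : ℕ} (f : (Fin ℓ → Bool) → Bool) (i : Fin ℓ) : ℝ :=
  (∑ p : Fin ℓ → Bool, |condExp f i p true - condExp f i p false|) / 2 ^ ℓ

/-- Total online influence. -/
noncomputable def totalOI {ℓ : ℕ} (f : (Fin ℓ → Bool) → Bool) : ℝ := ∑ i, oI f i

/-- Mean of `f` under the uniform distribution. -/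
noncomputable def meanF {ℓ : ℕ} (f : (Fin ℓ → Bool) → Bool) : ℝ :=
  (∑ x : Fin ℓ → Bool, b2r (f x)) / 2 ^ ℓ

/-- `e(f)(x) = (-1)^(f x)`. -/
noncomputable def esign {ℓ : ℕ} (f : (Fin ℓ → Bool) → Bool) (x : Fin ℓ → Bool) : ℝ :=
  if f x then -1 else 1

/-- Variance of `e(f) = (-1)^f` under the uniform distribution. -/
noncomputable def varE {ℓ : ℕ} (f : (Fin ℓ → Bool) → Bool) : ℝ :=
  (∑ x : Fin ℓ → Bool, esign f x ^ 2) / 2 ^ ℓ - ((∑ x : Fin ℓ → Bool, esign f x) / 2 ^ ℓ) ^ 2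

/-!
Expose `f` one coordinate at a time: the conditional expectations
`E[f | x₁, …, xᵢ]`, `i = 0, …, ℓ`, form a martingale running from `E f` to `f`. Averaging
over `xᵢ` shows that its `i`-th increment has absolute value half the difference that defines
`oI_i[f]`, so telescoping gives `E|f - E f| ≤ oI[f] / 2`. For a `{0,1}`-valued `f` with mean
`μ` the left side is `2μ(1 - μ)`, while `Var(e(f)) = 4μ(1 - μ)`.
-/

section PrefixAverage

variable {ℓ : ℕ}

-- `E[g | x₁, …, xᵢ](x)`: the average of `g` over the points that agree with `x` before `i`.
noncomputable def prefixAvg (g : (Fin ℓ → Bool) → ℝ) (i : ℕ) (x : Fin ℓ → Bool) : ℝ :=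
  (∑ y, if ∀ j : Fin ℓ, (j : ℕ) < i → y j = x j then g y else 0) / 2 ^ (ℓ - i)

lemma prefixAvg_zero (g : (Fin ℓ → Bool) → ℝ) (x : Fin ℓ → Bool) :
    prefixAvg g 0 x = (∑ y, g y) / 2 ^ ℓ := by
  simp [prefixAvg]

lemma prefixAvg_length (g : (Fin ℓ → Bool) → ℝ) (x : Fin ℓ → Bool) :
    prefixAvg g ℓ x = g x := by
  simp [prefixAvg, ← funext_iff]

lemma abs_sub_mean_le_sum_abs_prefixAvg_sub (g : (Fin ℓ → Bool) → ℝ) (x : Fin ℓ → Bool) :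
    |g x - (∑ y, g y) / 2 ^ ℓ| ≤
      ∑ i ∈ range ℓ, |prefixAvg g (i + 1) x - prefixAvg g i x| := by
  rw [← prefixAvg_length g x, ← prefixAvg_zero g x, ← sum_range_sub (prefixAvg g · x)]
  exact abs_sum_le_sum_abs _ _

end PrefixAverage

section OnlineInfluence

variable {ℓ : ℕ} (f : (Fin ℓ → Bool) → Bool)

lemma prefixAvg_succ_eq_condExp (i : Fin ℓ) (x : Fin ℓ → Bool) :
    prefixAvg (fun y => b2r (f y)) (i + 1) x = condExp f i x (x i) := by
  have agree_iff (y : Fin ℓ → Bool) :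
      (∀ j : Fin ℓ, (j : ℕ) < i + 1 → y j = x j) ↔ (∀ j, j < i → y j = x j) ∧ y i = x i := by
    simp only [Nat.lt_succ_iff_lt_or_eq, or_imp, forall_and, Fin.val_inj, Fin.val_fin_lt,
      forall_eq]
  simp only [prefixAvg, condExp, agree_iff, Nat.sub_sub]

lemma prefixAvg_eq_avg_condExp (i : Fin ℓ) (x : Fin ℓ → Bool) :
    prefixAvg (fun y => b2r (f y)) i x = (condExp f i x true + condExp f i x false) / 2 := by
  have split_last (y : Fin ℓ → Bool) :
      (if ∀ j : Fin ℓ, (j : ℕ) < i → y j = x j then b2r (f y) else 0) =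
        (if (∀ j, j < i → y j = x j) ∧ y i = true then b2r (f y) else 0) +
        (if (∀ j, j < i → y j = x j) ∧ y i = false then b2r (f y) else 0) := by
    cases y i <;> simp
  have pow_split : (2 : ℝ) ^ (ℓ - i) = 2 ^ (ℓ - i - 1) * 2 := by
    rw [← pow_succ]; congr 1; omega
  rw [prefixAvg, sum_congr rfl fun y _ => split_last y, sum_add_distrib, pow_split,
    condExp, condExp]
  field_simp

lemma abs_prefixAvg_succ_sub (i : Fin ℓ) (x : Fin ℓ → Bool) :
    |prefixAvg (fun y => b2r (f y)) (i + 1) x - prefixAvg (fun y => b2r (f y)) i x| =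
      |condExp f i x true - condExp f i x false| / 2 := by
  rw [prefixAvg_succ_eq_condExp, prefixAvg_eq_avg_condExp]
  cases x i
  · rw [← abs_neg, ← abs_two, ← abs_div]; ring_nf
  · rw [← abs_two, ← abs_div]; ring_nf

lemma two_mul_sum_abs_sub_meanF_le :
    2 * ∑ x, |b2r (f x) - meanF f| ≤ 2 ^ ℓ * totalOI f := by
  calc 2 * ∑ x, |b2r (f x) - meanF f|
      ≤ 2 * ∑ x, ∑ i ∈ range ℓ,
          |prefixAvg (fun y => b2r (f y)) (i + 1) x - prefixAvg (fun y => b2r (f y)) i x| := by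
        gcongr with x
        exact abs_sub_mean_le_sum_abs_prefixAvg_sub (fun y => b2r (f y)) x
    _ = 2 * ∑ i : Fin ℓ, ∑ x, |condExp f i x true - condExp f i x false| / 2 := by
        rw [sum_comm, ← Fin.sum_univ_eq_sum_range]
        simp only [abs_prefixAvg_succ_sub]
    _ = 2 ^ ℓ * totalOI f := by
        simp only [totalOI, oI, ← sum_div]
        field_simp

end OnlineInfluence

section Variance

variable {ℓ : ℕ} (f : (Fin ℓ → Bool) → Bool)

lemma sum_const_boolCube (c : ℝ) : ∑ _x : Fin ℓ → Bool, c = 2 ^ ℓ * c := by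
  simp

lemma sum_b2r_eq_mul_meanF : ∑ x, b2r (f x) = 2 ^ ℓ * meanF f := by
  rw [meanF]; field_simp

lemma varE_eq : varE f = 4 * meanF f * (1 - meanF f) := by
  have sq_esign (x : Fin ℓ → Bool) : esign f x ^ 2 = 1 := by
    unfold esign; split <;> norm_num
  have esign_eq (x : Fin ℓ → Bool) : esign f x = 1 - 2 * b2r (f x) := by
    unfold esign b2r; split <;> norm_num
  simp only [varE, sq_esign]
  simp only [esign_eq, sum_sub_distrib, ← mul_sum, sum_b2r_eq_mul_meanF, sum_const_boolCube]
  field_simp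
  ring

lemma mul_meanF_mul_one_sub_le :
    2 ^ ℓ * (2 * meanF f * (1 - meanF f)) ≤ ∑ x, |b2r (f x) - meanF f| := by
  -- `|b - μ| ≥ (b - μ)(2b - 1)` for `b ∈ {0, 1}`, and the right side sums to `2μ(1 - μ)`.
  have pointwise (x : Fin ℓ → Bool) :
      b2r (f x) + meanF f - 2 * meanF f * b2r (f x) ≤ |b2r (f x) - meanF f| := by
    unfold b2r
    split
    · linarith [le_abs_self (1 - meanF f)]
    · linarith [neg_abs_le (0 - meanF f)]
  calc 2 ^ ℓ * (2 * meanF f * (1 - meanF f))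
      = ∑ x, (b2r (f x) + meanF f - 2 * meanF f * b2r (f x)) := by
        simp only [sum_sub_distrib, sum_add_distrib, ← mul_sum, sum_b2r_eq_mul_meanF,
          sum_const_boolCube]
        ring
    _ ≤ ∑ x, |b2r (f x) - meanF f| := sum_le_sum fun x _ => pointwise x

end Variance

/-- Poincaré-style lower bound: `Var(e(f)) ≤ oI[f]`. -/
theorem var_le_totalOI {ℓ : ℕ} (f : (Fin ℓ → Bool) → Bool) : varE f ≤ totalOI f := by
  have scaled : 2 ^ ℓ * varE f ≤ 2 ^ ℓ * totalOI f := by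
    rw [varE_eq]
    linarith [mul_meanF_mul_one_sub_le f, two_mul_sum_abs_sub_meanF_le f]
  exact le_of_mul_le_mul_left scaled (by positivity)
end

section
/- If f: {0,1}^ℓ → {0,1} is unate (for each coordinate i, f is either nondecreasing or nonincreasing in that coordinate), then for every coordinate i, the online influence oI_i[f] equals the ordinary influence I_i[f]. -/
open Finset

/-- Ordinary influence of coordinate `i`: the probability that flipping coordinate `i`
changes the value of `f`. -/
noncomputable def infl {ℓ : ℕ} (f : (Fin ℓ → Bool) → Bool) (i : Fin ℓ) : ℝ :=
  (∑ x : Fin ℓ → Bool, if f x ≠ f (Function.update x i (!x i)) then (1 : ℝ) else 0) / 2 ^ ℓ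

/-!
Let `D x = f (x with xᵢ := 1) - f (x with xᵢ := 0)` (`coordDiff f i`). For a fixed prefix `p`, the
difference of the two conditional expectations in `oI` is the average of `D` over the completions
of `p` with `xᵢ = 1`. Unateness says exactly that `D` has constant sign, so the absolute value can
be moved inside that average; averaging over all prefixes then yields the mean of `|D|`, and
`|D x|` is the indicator that flipping coordinate `i` changes `f x`.
-/

open Function

section Cube

variable {ι : Type*} [DecidableEq ι]

theorem b2r_mono : Monotone b2r := by
  intro a b h
  cases a <;> cases b <;> simp_all [b2r, Bool.le_iff_imp]

noncomputable def coordDiff (f : (ι → Bool) → Bool) (i : ι) (x : ι → Bool) : ℝ :=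
  b2r (f (update x i true)) - b2r (f (update x i false))

theorem coordDiff_update (f : (ι → Bool) → Bool) (i : ι) (x : ι → Bool) (b : Bool) :
    coordDiff f i (update x i b) = coordDiff f i x := by
  simp only [coordDiff, update_idem]

theorem abs_coordDiff (f : (ι → Bool) → Bool) (i : ι) (x : ι → Bool) :
    |coordDiff f i x| = if f x ≠ f (update x i (!x i)) then 1 else 0 := by
  obtain ⟨y, b, rfl⟩ : ∃ y b, x = update y i b := ⟨x, x i, (update_eq_self i x).symm⟩
  cases b <;> simp only [coordDiff, update_idem, update_self, Bool.not_false, Bool.not_true] <;>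
    cases f (update y i true) <;> cases f (update y i false) <;> simp [b2r]

theorem coordDiff_nonneg_or_nonpos {f : (ι → Bool) → Bool} {i : ι}
    (hf : (∀ x, f (update x i false) ≤ f (update x i true)) ∨
      (∀ x, f (update x i true) ≤ f (update x i false))) :
    (∀ x, 0 ≤ coordDiff f i x) ∨ ∀ x, coordDiff f i x ≤ 0 :=
  hf.imp (fun h x => sub_nonneg.2 (b2r_mono (h x))) (fun h x => sub_nonpos.2 (b2r_mono (h x)))

theorem sum_filter_apply_eq_false_eq_sum_update {M : Type*} [AddCommMonoid M]
    {s : Finset (ι → Bool)} (i : ι) (hs : ∀ x b, update x i b ∈ s ↔ x ∈ s) (F : (ι → Bool) → M) :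
    ∑ x ∈ s with x i = false, F x = ∑ x ∈ s with x i = true, F (update x i false) := by
  refine sum_nbij' (update · i true) (update · i false) ?_ ?_ ?_ ?_ ?_ <;> intro x hx <;>
    simp only [mem_filter] at hx
  · simp [hs, hx.1]
  · simp [hs, hx.1]
  all_goals rw [update_idem, ← hx.2, update_eq_self]

theorem sum_eq_two_nsmul_sum_filter_apply_eq_true [Fintype ι] {M : Type*} [AddCommMonoid M]
    (i : ι) (h : (ι → Bool) → M) (hh : ∀ x b, h (update x i b) = h x) :
    ∑ x, h x = 2 • ∑ x with x i = true, h x := by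
  rw [← sum_filter_add_sum_filter_not univ (fun x => x i = true), two_nsmul]
  simp_rw [Bool.not_eq_true]
  rw [sum_filter_apply_eq_false_eq_sum_update i (fun _ _ => by simp)]
  simp only [hh]

theorem card_filter_forall_imp_apply_eq [Fintype ι] (P : ι → Prop) [DecidablePred P]
    (x : ι → Bool) :
    #{p : ι → Bool | ∀ j, P j → x j = p j} = 2 ^ #{j | ¬ P j} := by
  have : ({p : ι → Bool | ∀ j, P j → x j = p j} : Finset _) =
      Fintype.piFinset (fun j => if P j then {x j} else univ) := by
    ext p
    simp only [mem_filter, mem_univ, true_and, Fintype.mem_piFinset]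
    refine forall_congr' fun j => ?_
    split_ifs with hj
    · simp only [hj, true_imp_iff, mem_singleton, eq_comm]
    · simp [hj]
  simp_rw [this, Fintype.card_piFinset, apply_ite card, card_singleton, card_univ,
    Fintype.card_bool]
  rw [prod_ite, prod_const_one, prod_const, one_mul]

theorem sum_sum_filter_forall_imp_apply_eq [Fintype ι] {M : Type*} [AddCommMonoid M]
    (P : ι → Prop) [DecidablePred P] (Q : (ι → Bool) → Prop) [DecidablePred Q]
    (h : (ι → Bool) → M) :
    ∑ p : ι → Bool, ∑ x with (∀ j, P j → x j = p j) ∧ Q x, h x =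
      2 ^ #{j | ¬ P j} • ∑ x with Q x, h x := by
  simp_rw [sum_filter, ite_and]
  rw [sum_comm, smul_sum]
  refine sum_congr rfl fun x _ => ?_
  rw [← sum_filter, sum_const, card_filter_forall_imp_apply_eq]

theorem Finset.abs_sum_of_nonneg_or_nonpos {α G : Type*} [AddCommGroup G] [LinearOrder G]
    [IsOrderedAddMonoid G] {s : Finset α} {g : α → G} (hg : (∀ x, 0 ≤ g x) ∨ ∀ x, g x ≤ 0) :
    |∑ x ∈ s, g x| = ∑ x ∈ s, |g x| := by
  rcases hg with hg | hg
  · rw [abs_sum_of_nonneg' hg]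
    exact sum_congr rfl fun x _ => (abs_of_nonneg (hg x)).symm
  · rw [← abs_neg, ← sum_neg_distrib, abs_sum_of_nonneg' fun x => neg_nonneg.2 (hg x)]
    exact sum_congr rfl fun x _ => (abs_of_nonpos (hg x)).symm

end Cube

section OnlineInfluence

variable {ℓ : ℕ}

theorem card_filter_not_lt (i : Fin ℓ) : #{j | ¬ j < i} = ℓ - i := by
  simp only [not_lt, filter_le_eq_Ici, Fin.card_Ici]

theorem condExp_true_sub_condExp_false (f : (Fin ℓ → Bool) → Bool) (i : Fin ℓ)
    (p : Fin ℓ → Bool) :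
    condExp f i p true - condExp f i p false =
      (∑ x with (∀ j, j < i → x j = p j) ∧ x i = true, coordDiff f i x) / 2 ^ (ℓ - i - 1) := by
  set S : Finset (Fin ℓ → Bool) := {x | ∀ j, j < i → x j = p j}
  have hS : ∀ x b, update x i b ∈ S ↔ x ∈ S := fun x b => by
    simp only [S, mem_filter, mem_univ, true_and]
    exact forall_congr' fun j => imp_congr_right fun hj => by rw [update_of_ne hj.ne]
  have htrue : ∑ x ∈ S with x i = true, b2r (f x) =
      ∑ x ∈ S with x i = true, b2r (f (update x i true)) :=
    sum_congr rfl fun x hx => by rw [← (mem_filter.1 hx).2, update_eq_self]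
  rw [condExp, condExp, div_sub_div_same, ← sum_filter, ← sum_filter, ← filter_filter,
    ← filter_filter, sum_filter_apply_eq_false_eq_sum_update i hS, htrue, ← sum_sub_distrib]
  rfl

theorem sum_abs_condExp_sub_condExp {f : (Fin ℓ → Bool) → Bool} {i : Fin ℓ}
    (hf : (∀ x, 0 ≤ coordDiff f i x) ∨ ∀ x, coordDiff f i x ≤ 0) :
    ∑ p, |condExp f i p true - condExp f i p false| = ∑ x, |coordDiff f i x| := by
  have hpow : (2 : ℝ) ^ (ℓ - i) = 2 * 2 ^ (ℓ - i - 1) := by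
    rw [← pow_succ', Nat.sub_one_add_one (Nat.sub_ne_zero_of_lt i.isLt)]
  calc ∑ p, |condExp f i p true - condExp f i p false|
      = (∑ p : Fin ℓ → Bool, ∑ x with (∀ j, j < i → x j = p j) ∧ x i = true,
          |coordDiff f i x|) / 2 ^ (ℓ - i - 1) := by
        simp_rw [condExp_true_sub_condExp_false, abs_div, abs_pow, abs_two,
          abs_sum_of_nonneg_or_nonpos hf, sum_div]
    _ = (2 ^ #{j | ¬ j < i} • ∑ x with x i = true, |coordDiff f i x|) / 2 ^ (ℓ - i - 1) := by
        congr 1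
        -- `condExp` decides `∀ j < i, _` by `Nat.decidableForallFin`, not the generic instance
        convert sum_sum_filter_forall_imp_apply_eq (· < i) (· i = true) fun x => |coordDiff f i x|
    _ = 2 • ∑ x with x i = true, |coordDiff f i x| := by
        rw [card_filter_not_lt, nsmul_eq_mul, nsmul_eq_mul, Nat.cast_pow, Nat.cast_ofNat, hpow]
        field_simp
    _ = ∑ x, |coordDiff f i x| :=
        (sum_eq_two_nsmul_sum_filter_apply_eq_true i _ fun x b => by rw [coordDiff_update]).symm

end OnlineInfluence

/-- For unate `f` (each coordinate nondecreasing or nonincreasing), the online influence of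
every coordinate equals its ordinary influence. -/
theorem oI_eq_infl_of_unate {ℓ : ℕ} (f : (Fin ℓ → Bool) → Bool)
    (hf : ∀ i : Fin ℓ,
      (∀ x, f (Function.update x i false) ≤ f (Function.update x i true)) ∨
      (∀ x, f (Function.update x i true) ≤ f (Function.update x i false))) :
    ∀ i : Fin ℓ, oI f i = infl f i := by
  intro i
  rw [oI, infl, sum_abs_condExp_sub_condExp (coordDiff_nonneg_or_nonpos (hf i))]
  simp_rw [abs_coordDiff]
end

section
/- Let ℓ = k + 2^k and let ADDR: {0,1}^k × ({0,1})^{2^k} → {0,1} be the address function defined by ADDR(a, y) = y_{bin(a)}, where bin(a) interprets a as an index in {0,...,2^k - 1}, with the address bits a appearing first in the input order. Then every coordinate i ∈ [ℓ] has online influence oI_i[ADDR] ≤ 2/ℓ (up to a universal constant: oI_i[ADDR] = O(1/ℓ)), and ADDR is balanced, i.e., E[ADDR] = 1/2 under the uniform distribution. -/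
open Finset

/-- The binary index encoded by the first `k` (address) bits. -/
def addrIdx (k : ℕ) {m : ℕ} (z : Fin (k + m) → Bool) : ℕ :=
  ∑ j : Fin k, if z (Fin.castLE (Nat.le_add_right k m) j) then 2 ^ (j : ℕ) else 0

lemma addrIdx_lt (k : ℕ) (z : Fin (k + 2 ^ k) → Bool) : addrIdx k z < 2 ^ k := by
  have h : ∀ j : Fin k, (if z (Fin.castLE (Nat.le_add_right k (2 ^ k)) j)
      then 2 ^ (j : ℕ) else 0) ≤ 2 ^ (j : ℕ) := by
    intro j; split <;> simp
  calc addrIdx k z ≤ ∑ j : Fin k, 2 ^ (j : ℕ) := Finset.sum_le_sum fun j _ => h j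
    _ = 2 ^ k - 1 := by
        rw [Fin.sum_univ_eq_sum_range]
        have := Nat.geomSum_eq (le_refl 2) k
        simp [this]
    _ < 2 ^ k := by have : 0 < 2 ^ k := (by positivity); omega

/-- The address function on `ℓ = k + 2^k` bits: the first `k` bits index one of the
remaining `2^k` data bits, whose value is output. -/
def ADDR (k : ℕ) (z : Fin (k + 2 ^ k) → Bool) : Bool :=
  z ⟨k + addrIdx k z, by have := addrIdx_lt k z; omega⟩

/-!
Write `addrPos z` for the data coordinate selected by the address bits of `z`, and fix a prefix
`p` and a coordinate `i`. If `i < addrPos p`, flipping the selected data bit maps the cylinder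
of inputs that agree with `p` before `i` and have a fixed bit at `i` to itself, and it negates
`ADDR`, so both conditional expectations equal `1/2`. If `i = addrPos p`, then `ADDR` equals
coordinate `i` on the cylinder, and if `i > addrPos p`, it is constant there. So `oI_i` is the
probability that the address points at `i`. That is `2⁻ᵏ` for a data bit and `0` for an
address bit, and `2⁻ᵏ ≤ 2 / (k + 2ᵏ)` since `k ≤ 2ᵏ`. The same flip shows that `ADDR` is
balanced.
-/

lemma b2r_not (b : Bool) : b2r (!b) = 1 - b2r b := by cases b <;> simp [b2r]

lemma sum_b2r_eq_half_card_of_involution {α : Type*} {S : Finset α} {f : α → Bool} (σ : α → α)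
    (hσS : ∀ x ∈ S, σ x ∈ S) (hσσ : ∀ x ∈ S, σ (σ x) = x) (hf : ∀ x ∈ S, f (σ x) = !f x) :
    ∑ x ∈ S, b2r (f x) = #S / 2 := by
  have hsum : ∑ x ∈ S, b2r (f (σ x)) = ∑ x ∈ S, b2r (f x) :=
    sum_nbij' σ σ hσS hσS hσσ hσσ fun _ _ => rfl
  rw [sum_congr rfl fun x hx => by rw [hf x hx, b2r_not], sum_sub_distrib, sum_const,
    nsmul_one] at hsum
  linarith

lemma meanF_eq_half_of_involutive {ℓ : ℕ} {f : (Fin ℓ → Bool) → Bool}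
    {σ : (Fin ℓ → Bool) → Fin ℓ → Bool} (hσ : Function.Involutive σ)
    (hf : ∀ x, f (σ x) = !f x) :
    meanF f = 1 / 2 := by
  rw [meanF, sum_b2r_eq_half_card_of_involution σ (fun x _ => mem_univ _) (fun x _ => hσ x)
    (fun x _ => hf x), card_univ, Fintype.card_fun, Fintype.card_bool, Fintype.card_fin]
  push_cast
  field_simp

section Cylinder

variable {ℓ : ℕ}

def cylinder (i : Fin ℓ) (p : Fin ℓ → Bool) (b : Bool) : Finset (Fin ℓ → Bool) :=
  univ.filter fun x => (∀ j, j < i → x j = p j) ∧ x i = b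

lemma cylinder_eq_piFinset (i : Fin ℓ) (p : Fin ℓ → Bool) (b : Bool) :
    cylinder i p b =
      Fintype.piFinset fun j => if i < j then univ else {Function.update p i b j} := by
  ext x
  simp only [cylinder, mem_filter, mem_univ, true_and, Fintype.mem_piFinset]
  constructor
  · rintro ⟨hlt, heq⟩ j
    rcases lt_trichotomy j i with h | rfl | h
    · simp [h.not_gt, h.ne, hlt j h]
    · simp [heq]
    · simp [h]
  · intro h
    refine ⟨fun j hj => ?_, ?_⟩
    · simpa [hj.not_gt, hj.ne] using h j
    · simpa using h i

lemma card_cylinder (i : Fin ℓ) (p : Fin ℓ → Bool) (b : Bool) :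
    #(cylinder i p b) = 2 ^ (ℓ - i - 1) := by
  rw [cylinder_eq_piFinset, Fintype.card_piFinset]
  simp only [apply_ite card, card_univ, Fintype.card_bool, card_singleton]
  rw [← prod_filter, prod_const, filter_lt_eq_Ioi, Fin.card_Ioi]
  congr 1
  omega

lemma condExp_eq_sum_div_card (f : (Fin ℓ → Bool) → Bool) (i : Fin ℓ) (p : Fin ℓ → Bool)
    (b : Bool) :
    condExp f i p b = (∑ x ∈ cylinder i p b, b2r (f x)) / #(cylinder i p b) := by
  rw [condExp, card_cylinder, cylinder, sum_filter]
  push_cast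
  rfl

lemma condExp_eq_of_forall_mem_cylinder {f : (Fin ℓ → Bool) → Bool} {i : Fin ℓ}
    {p : Fin ℓ → Bool} {b c : Bool} (h : ∀ x ∈ cylinder i p b, f x = c) :
    condExp f i p b = b2r c := by
  have hne : (#(cylinder i p b) : ℝ) ≠ 0 := by rw [card_cylinder]; positivity
  rw [condExp_eq_sum_div_card, sum_congr rfl fun x hx => by rw [h x hx], sum_const,
    nsmul_eq_mul, mul_div_cancel_left₀ _ hne]

lemma condExp_eq_half_of_involutive {f : (Fin ℓ → Bool) → Bool} {i : Fin ℓ}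
    {p : Fin ℓ → Bool} {b : Bool} {σ : (Fin ℓ → Bool) → Fin ℓ → Bool}
    (hσ : Function.Involutive σ) (hf : ∀ x, f (σ x) = !f x)
    (hσS : ∀ x ∈ cylinder i p b, σ x ∈ cylinder i p b) :
    condExp f i p b = 1 / 2 := by
  have hne : (#(cylinder i p b) : ℝ) ≠ 0 := by rw [card_cylinder]; positivity
  rw [condExp_eq_sum_div_card,
    sum_b2r_eq_half_card_of_involution σ hσS (fun x _ => hσ x) (fun x _ => hf x)]
  field_simp

end Cylinder

section Address

variable {k : ℕ}

def addrPos (k : ℕ) (z : Fin (k + 2 ^ k) → Bool) : Fin (k + 2 ^ k) :=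
  ⟨k + addrIdx k z, by have := addrIdx_lt k z; omega⟩

lemma ADDR_eq_apply_addrPos (z : Fin (k + 2 ^ k) → Bool) : ADDR k z = z (addrPos k z) := rfl

lemma le_addrPos (z : Fin (k + 2 ^ k) → Bool) : k ≤ (addrPos k z : ℕ) := Nat.le_add_right _ _

lemma addrPos_eq_of_forall_lt_eq {x z : Fin (k + 2 ^ k) → Bool} {i : Fin (k + 2 ^ k)}
    (hki : k ≤ (i : ℕ)) (h : ∀ j, j < i → x j = z j) : addrPos k x = addrPos k z := by
  simp only [addrPos, addrIdx, Fin.mk.injEq, add_right_inj]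
  refine sum_congr rfl fun j _ => ?_
  rw [h _ (Fin.lt_def.mpr (by simp; omega))]

noncomputable def flipAddr (k : ℕ) (z : Fin (k + 2 ^ k) → Bool) : Fin (k + 2 ^ k) → Bool :=
  Function.update z (addrPos k z) (!ADDR k z)

lemma flipAddr_apply_of_lt {z : Fin (k + 2 ^ k) → Bool} {j : Fin (k + 2 ^ k)}
    (h : j < addrPos k z) : flipAddr k z j = z j :=
  Function.update_of_ne h.ne _ _

lemma addrPos_flipAddr (z : Fin (k + 2 ^ k) → Bool) : addrPos k (flipAddr k z) = addrPos k z :=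
  addrPos_eq_of_forall_lt_eq (le_addrPos z) fun _ => flipAddr_apply_of_lt

lemma ADDR_flipAddr (z : Fin (k + 2 ^ k) → Bool) : ADDR k (flipAddr k z) = !ADDR k z := by
  rw [ADDR_eq_apply_addrPos, addrPos_flipAddr, flipAddr, Function.update_self]

lemma flipAddr_involutive : Function.Involutive (flipAddr k) := fun z => by
  rw [flipAddr, addrPos_flipAddr, ADDR_flipAddr, Bool.not_not, flipAddr,
    Function.update_idem, ADDR_eq_apply_addrPos, Function.update_eq_self]

lemma condExp_ADDR_of_lt {i : Fin (k + 2 ^ k)} {p : Fin (k + 2 ^ k) → Bool} (b : Bool)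
    (hi : i < addrPos k p) : condExp (ADDR k) i p b = 1 / 2 := by
  have hlt : ∀ x ∈ cylinder i p b, i < addrPos k x := by
    intro x hx
    by_cases hki : k ≤ (i : ℕ)
    · rwa [addrPos_eq_of_forall_lt_eq hki (mem_filter.mp hx).2.1]
    · exact Fin.lt_def.mpr (by have := le_addrPos (k := k) x; omega)
  refine condExp_eq_half_of_involutive flipAddr_involutive ADDR_flipAddr fun x hx => ?_
  obtain ⟨hpre, hbit⟩ := (mem_filter.mp hx).2
  have hfix : ∀ j, j ≤ i → flipAddr k x j = x j :=
    fun j hj => flipAddr_apply_of_lt (hj.trans_lt (hlt x hx))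
  simp only [cylinder, mem_filter, mem_univ, true_and]
  exact ⟨fun j hj => (hfix j hj.le).trans (hpre j hj), (hfix i le_rfl).trans hbit⟩

lemma condExp_ADDR_addrPos (p : Fin (k + 2 ^ k) → Bool) (b : Bool) :
    condExp (ADDR k) (addrPos k p) p b = b2r b :=
  condExp_eq_of_forall_mem_cylinder fun x hx => by
    obtain ⟨hpre, hbit⟩ := (mem_filter.mp hx).2
    rwa [ADDR_eq_apply_addrPos, addrPos_eq_of_forall_lt_eq (le_addrPos p) hpre]

lemma condExp_ADDR_of_gt {i : Fin (k + 2 ^ k)} {p : Fin (k + 2 ^ k) → Bool} (b : Bool)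
    (hi : addrPos k p < i) : condExp (ADDR k) i p b = b2r (ADDR k p) :=
  condExp_eq_of_forall_mem_cylinder fun x hx => by
    have hpre := (mem_filter.mp hx).2.1
    have hki : k ≤ (i : ℕ) := (le_addrPos p).trans (Fin.le_def.mp hi.le)
    rw [ADDR_eq_apply_addrPos, addrPos_eq_of_forall_lt_eq hki hpre, hpre _ hi,
      ADDR_eq_apply_addrPos]

lemma abs_condExp_ADDR_sub (i : Fin (k + 2 ^ k)) (p : Fin (k + 2 ^ k) → Bool) :
    |condExp (ADDR k) i p true - condExp (ADDR k) i p false| =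
      if addrPos k p = i then 1 else 0 := by
  rcases lt_trichotomy i (addrPos k p) with h | rfl | h
  · simp [condExp_ADDR_of_lt _ h, h.ne']
  · simp [condExp_ADDR_addrPos, b2r]
  · simp [condExp_ADDR_of_gt _ h, h.ne]

def binEquiv (k : ℕ) : (Fin k → Bool) ≃ Fin (2 ^ k) :=
  (Equiv.arrowCongr (Equiv.refl _) finTwoEquiv.symm).trans finFunctionFinEquiv

lemma addrIdx_append {m : ℕ} (a : Fin k → Bool) (d : Fin m → Bool) :
    addrIdx k (Fin.append a d) = binEquiv k a := by
  simp only [addrIdx, Fin.append_left', binEquiv, Equiv.trans_apply, finFunctionFinEquiv_apply]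
  refine sum_congr rfl fun j _ => ?_
  cases h : a j <;> simp [h] <;> rfl

lemma card_addrIdx_eq {m : ℕ} (t : Fin (2 ^ k)) :
    #{p : Fin (k + m) → Bool | addrIdx k p = t} = 2 ^ m := by
  rw [card_filter, ← (Fin.appendEquiv k m).sum_comp, Fintype.sum_prod_type]
  simp only [Fin.appendEquiv, Equiv.coe_fn_mk, addrIdx_append, Fin.val_inj,
    ← (binEquiv k).eq_symm_apply]
  simp

lemma card_addrPos_eq {i : Fin (k + 2 ^ k)} (hki : k ≤ (i : ℕ)) :
    #{p | addrPos k p = i} = 2 ^ 2 ^ k := by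
  have hlt : (i : ℕ) - k < 2 ^ k := by omega
  refine (congrArg card (filter_congr fun p _ => ?_)).trans
    (card_addrIdx_eq ⟨(i : ℕ) - k, hlt⟩)
  simp only [addrPos, Fin.ext_iff]
  omega

lemma oI_ADDR (i : Fin (k + 2 ^ k)) :
    oI (ADDR k) i = if k ≤ (i : ℕ) then 1 / 2 ^ k else 0 := by
  rw [oI, sum_congr rfl fun p _ => abs_condExp_ADDR_sub i p, sum_boole]
  split_ifs with hki
  · rw [card_addrPos_eq hki, pow_add]
    push_cast
    field_simp
  · have hempty : ({p | addrPos k p = i} : Finset _) = ∅ :=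
      filter_false_of_mem fun p _ h => hki (h ▸ le_addrPos p)
    simp [hempty]

end Address

lemma one_div_two_pow_le_two_div_add_two_pow (k : ℕ) :
    (1 : ℝ) / 2 ^ k ≤ 2 / (k + 2 ^ k) := by
  have hk : (k : ℝ) ≤ 2 ^ k := by exact_mod_cast k.lt_two_pow_self.le
  rw [div_le_div_iff₀ (by positivity) (by positivity)]
  linarith

/-- Every coordinate of the address function has online influence `≤ 2/ℓ`, and
the address function is balanced. -/
theorem addr_oI_small_and_balanced (k : ℕ) :
    (∀ i : Fin (k + 2 ^ k), oI (ADDR k) i ≤ 2 / (k + 2 ^ k : ℝ)) ∧ meanF (ADDR k) = 1 / 2 := by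
  refine ⟨fun i => ?_, meanF_eq_half_of_involutive flipAddr_involutive ADDR_flipAddr⟩
  rw [oI_ADDR]
  split_ifs
  · exact one_div_two_pow_le_two_div_add_two_pow k
  · positivity
end

section
/- For any Boolean function f: {0,1}^ℓ → {0,1} and any set B ⊆ [ℓ] of coordinates, the online influence of the coalition B is at most the sum of the individual online influences taken over worst-case restrictions; in particular, for a singleton B = {i}, oI_B(f) = oI_i[f]/2. -/
open Finset

/-- The string produced when an online adversary controlling the coordinates in `B`
plays against the uniform seed `r`: coordinates outside `B` take their value from `r`,
and each coordinate in `B` is set by the strategy `σ` as a function of the coordinates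
with smaller index (the strategy only sees coordinates of smaller index; the others are
masked with the default value `d`). -/
def play {n : ℕ} {α : Type*} (B : Finset (Fin n)) (σ : Fin n → (Fin n → α) → α)
    (d : α) (r : Fin n → α) (i : Fin n) : α :=
  if i ∈ B then σ i (fun j => if h : (j : ℕ) < (i : ℕ) then play B σ d r j else d) else r i
termination_by (i : ℕ)
decreasing_by exact h

/-- Expected value of `f` on the source produced by the online adversary `(B, σ)`. -/
noncomputable def meanPlay {ℓ : ℕ} (f : (Fin ℓ → Bool) → Bool)
    (B : Finset (Fin ℓ)) (σ : Fin ℓ → (Fin ℓ → Bool) → Bool) : ℝ :=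
  (∑ r : Fin ℓ → Bool, b2r (f (play B σ false r))) / 2 ^ ℓ

/-- Worst-case-prefix online influence of coordinate `i`. -/
noncomputable def maxOI {ℓ : ℕ} (f : (Fin ℓ → Bool) → Bool) (i : Fin ℓ) : ℝ :=
  ⨆ p : Fin ℓ → Bool, |condExp f i p true - condExp f i p false|

/-! Hybrid argument. Let the adversary control only the coordinates of `B` below `m`: this
interpolates between the uniform distribution (`m = 0`) and the full adversary (`m = ℓ`).
Going from `m = i` to `m = i + 1` only replaces bit `i` by a function of the prefix before `i`.
Grouping seeds by that prefix, the change of `E f` is half the average, over the prefixes the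
adversary produces, of `±(E[f | prefix, x_i = 1] - E[f | prefix, x_i = 0])`, hence at most
`maxOI f i / 2`. For a single coordinate the prefix is uniform, so the change is exactly half
the signed average of these differences, and choosing each sign to match attains `oI f i / 2`. -/

namespace OnlineInfluence

variable {ℓ : ℕ}

def cylinder (i : Fin ℓ) (p : Fin ℓ → Bool) : Finset (Fin ℓ → Bool) :=
  Fintype.piFinset fun j => if j < i then {p j} else univ

lemma mem_cylinder {i : Fin ℓ} {p x : Fin ℓ → Bool} :
    x ∈ cylinder i p ↔ ∀ j < i, x j = p j := by
  simp only [cylinder, Fintype.mem_piFinset]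
  refine forall_congr' fun j => ?_
  split_ifs with hj <;> simp [hj]

lemma mem_cylinder_comm {i : Fin ℓ} {p x : Fin ℓ → Bool} :
    x ∈ cylinder i p ↔ p ∈ cylinder i x := by
  simp only [mem_cylinder, eq_comm]

lemma card_cylinder (i : Fin ℓ) (p : Fin ℓ → Bool) : #(cylinder i p) = 2 ^ (ℓ - i) := by
  rw [cylinder, Fintype.card_piFinset]
  simp only [apply_ite Finset.card, card_singleton, card_univ, Fintype.card_bool]
  rw [prod_ite, prod_const_one, prod_const, one_mul, ← Fin.card_Ici]
  congr 2
  ext j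
  simp

lemma sum_sum_cylinder (i : Fin ℓ) (Φ : (Fin ℓ → Bool) → ℝ) :
    ∑ p, ∑ x ∈ cylinder i p, Φ x = 2 ^ (ℓ - i) * ∑ x, Φ x := by
  rw [sum_comm' (t' := univ) (s' := cylinder i) (fun p x => by simp [mem_cylinder_comm]), mul_sum]
  simp [card_cylinder]

def splice {α : Type*} (i : Fin ℓ) (q r : Fin ℓ → α) : Fin ℓ → α :=
  fun j => if j < i then q j else r j

lemma splice_eq_of_mem_cylinder {i : Fin ℓ} {p y : Fin ℓ → Bool} (h : y ∈ cylinder i p)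
    (r : Fin ℓ → Bool) : splice i y r = splice i p r := by
  ext j
  by_cases hj : j < i <;> simp [splice, hj, mem_cylinder.mp h j]

lemma splice_mem_cylinder (i : Fin ℓ) (p r : Fin ℓ → Bool) : splice i p r ∈ cylinder i p :=
  mem_cylinder.mpr fun _ hj => if_pos hj

lemma splice_self {α : Type*} (i : Fin ℓ) (r : Fin ℓ → α) : splice i r r = r := by
  ext j
  by_cases hj : j < i <;> simp [splice, hj]

lemma splice_splice {α : Type*} (i : Fin ℓ) (p q r : Fin ℓ → α) :
    splice i p (splice i q r) = splice i p r := by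
  ext j
  by_cases hj : j < i <;> simp [splice, hj]

lemma cylinder_eq_of_mem {i : Fin ℓ} {p y : Fin ℓ → Bool} (h : y ∈ cylinder i p) :
    cylinder i y = cylinder i p := by
  ext x
  simp only [mem_cylinder]
  exact forall₂_congr fun j hj => by rw [mem_cylinder.mp h j hj]

lemma sum_cylinder_splice (i : Fin ℓ) (p q : Fin ℓ → Bool) (Φ : (Fin ℓ → Bool) → ℝ) :
    ∑ r ∈ cylinder i p, Φ (splice i q r) = ∑ y ∈ cylinder i q, Φ y := by
  have hinv {p q x : Fin ℓ → Bool} (hx : x ∈ cylinder i p) : splice i p (splice i q x) = x := by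
    rw [splice_splice, ← splice_eq_of_mem_cylinder hx, splice_self]
  exact sum_nbij' (splice i q) (splice i p) (fun x _ => splice_mem_cylinder i q x)
    (fun y _ => splice_mem_cylinder i p y) (fun _ hx => hinv hx) (fun _ hy => hinv hy)
    fun _ _ => rfl

def flipAt (i : Fin ℓ) : Equiv.Perm (Fin ℓ → Bool) where
  toFun x := Function.update x i (!x i)
  invFun x := Function.update x i (!x i)
  left_inv x := by simp
  right_inv x := by simp

lemma flipAt_apply (i : Fin ℓ) (x : Fin ℓ → Bool) : flipAt i x = Function.update x i (!x i) :=
  rfl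

lemma flipAt_mem_cylinder {i : Fin ℓ} {p x : Fin ℓ → Bool} :
    flipAt i x ∈ cylinder i p ↔ x ∈ cylinder i p := by
  simp only [mem_cylinder, flipAt_apply]
  refine forall₂_congr fun j hj => ?_
  rw [Function.update_of_ne hj.ne]

lemma sum_cylinder_update (i : Fin ℓ) (p : Fin ℓ → Bool) (F : (Fin ℓ → Bool) → ℝ) (c : Bool) :
    ∑ x ∈ cylinder i p, F (Function.update x i c) = 2 * ∑ x ∈ cylinder i p with x i = c, F x := by
  have hflip : ∑ x ∈ cylinder i p with ¬x i = c, F (flipAt i x)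
      = ∑ x ∈ cylinder i p with x i = c, F x := by
    refine sum_equiv (flipAt i) (fun x => ?_) fun _ _ => rfl
    rw [mem_filter, mem_filter, flipAt_mem_cylinder, flipAt_apply, Function.update_self,
      Bool.not_eq_eq_eq_not, Bool.eq_not]
  rw [← sum_filter_add_sum_filter_not _ (fun x => x i = c), two_mul]
  congr 1
  · refine sum_congr rfl fun x hx => ?_
    rw [← (mem_filter.mp hx).2, Function.update_eq_self]
  · rw [← hflip]
    refine sum_congr rfl fun x hx => ?_
    rw [flipAt_apply, Bool.eq_not.mpr (mem_filter.mp hx).2, Bool.not_not]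

def boolSign (c : Bool) : ℝ := if c then 1 else -1

lemma abs_boolSign_mul (c : Bool) (a : ℝ) : |boolSign c * a| = |a| := by
  cases c <;> simp [boolSign]

lemma boolSign_decide_mul (a : ℝ) : boolSign (decide (0 ≤ a)) * a = |a| := by
  by_cases ha : 0 ≤ a
  · simp [boolSign, ha, abs_of_nonneg ha]
  · simp [boolSign, ha, abs_of_neg (not_le.mp ha)]

noncomputable def condExpDiff (f : (Fin ℓ → Bool) → Bool) (i : Fin ℓ) (p : Fin ℓ → Bool) : ℝ :=
  condExp f i p true - condExp f i p false

lemma condExp_mul_pow (f : (Fin ℓ → Bool) → Bool) (i : Fin ℓ) (p : Fin ℓ → Bool) (b : Bool) :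
    condExp f i p b * 2 ^ (ℓ - i - 1) = ∑ x ∈ cylinder i p with x i = b, b2r (f x) := by
  rw [condExp, div_mul_cancel₀ _ (by positivity), ← sum_filter]
  congr 1
  ext x
  simp [mem_cylinder]

lemma condExpDiff_of_mem_cylinder (f : (Fin ℓ → Bool) → Bool) {i : Fin ℓ} {p y : Fin ℓ → Bool}
    (h : y ∈ cylinder i p) : condExpDiff f i y = condExpDiff f i p := by
  have hb (b : Bool) : condExp f i y b = condExp f i p b := by
    refine mul_right_cancel₀ (pow_ne_zero (ℓ - i - 1) (two_ne_zero (α := ℝ))) ?_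
    rw [condExp_mul_pow, condExp_mul_pow, cylinder_eq_of_mem h]
  rw [condExpDiff, condExpDiff, hb, hb]

lemma sum_cylinder_update_sub (f : (Fin ℓ → Bool) → Bool) (i : Fin ℓ) (p : Fin ℓ → Bool)
    (c : Bool) :
    ∑ x ∈ cylinder i p, (b2r (f (Function.update x i c)) - b2r (f x))
      = 2 ^ (ℓ - i - 1) * (boolSign c * condExpDiff f i p) := by
  have hsplit : ∑ x ∈ cylinder i p, b2r (f x)
      = (∑ x ∈ cylinder i p with x i = true, b2r (f x))
        + ∑ x ∈ cylinder i p with x i = false, b2r (f x) := by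
    rw [sum_filter, sum_filter, ← sum_add_distrib]
    exact sum_congr rfl fun x _ => by cases x i <;> simp
  rw [sum_sub_distrib, sum_cylinder_update _ _ (fun x => b2r (f x)), hsplit, condExpDiff,
    ← condExp_mul_pow, ← condExp_mul_pow, ← condExp_mul_pow]
  cases c <;> simp only [boolSign, Bool.false_eq_true, if_true, if_false] <;> ring

/-- `hT` says that `T` acts online on the coordinates below `i`: it maps the cylinder of `p` onto
that of `T p`, keeping the coordinates from `i` on. -/
lemma sum_update_online (f : (Fin ℓ → Bool) → Bool) (i : Fin ℓ)
    (T : (Fin ℓ → Bool) → Fin ℓ → Bool) (hT : ∀ p, ∀ r ∈ cylinder i p, T r = splice i (T p) r)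
    (g : (Fin ℓ → Bool) → Bool) (hg : ∀ p, ∀ y ∈ cylinder i p, g y = g p) :
    ∑ r, (b2r (f (Function.update (T r) i (g (T r)))) - b2r (f (T r)))
      = (∑ p, boolSign (g (T p)) * condExpDiff f i (T p)) / 2 := by
  set Ψ : (Fin ℓ → Bool) → ℝ := fun y => b2r (f (Function.update y i (g y))) - b2r (f y)
  have hpow : (2 : ℝ) ^ (ℓ - i) = 2 * 2 ^ (ℓ - i - 1) := by
    rw [← pow_succ']
    congr 1
    omega
  refine mul_left_cancel₀ (pow_ne_zero (ℓ - i) (two_ne_zero (α := ℝ))) ?_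
  calc 2 ^ (ℓ - i) * ∑ r, Ψ (T r)
      = ∑ p, ∑ r ∈ cylinder i p, Ψ (splice i (T p) r) := by
        rw [← sum_sum_cylinder]
        exact sum_congr rfl fun p _ => sum_congr rfl fun r hr => by rw [hT p r hr]
    _ = ∑ p, ∑ y ∈ cylinder i (T p), Ψ y := by simp only [sum_cylinder_splice]
    _ = ∑ p, 2 ^ (ℓ - i - 1) * (boolSign (g (T p)) * condExpDiff f i (T p)) := by
        refine sum_congr rfl fun p _ => ?_
        rw [← sum_cylinder_update_sub]
        exact sum_congr rfl fun y hy => by simp only [Ψ, hg _ y hy]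
    _ = 2 ^ (ℓ - i) * ((∑ p, boolSign (g (T p)) * condExpDiff f i (T p)) / 2) := by
        rw [← mul_sum, hpow]
        ring

section Play

variable {α : Type*} {B B₁ B₂ : Finset (Fin ℓ)} {σ : Fin ℓ → (Fin ℓ → α) → α} {d : α}

lemma play_of_not_mem (r : Fin ℓ → α) {i : Fin ℓ} (h : i ∉ B) : play B σ d r i = r i := by
  rw [play, if_neg h]

lemma play_of_mem (r : Fin ℓ → α) {i : Fin ℓ} (h : i ∈ B) :
    play B σ d r i = σ i (splice i (play B σ d r) fun _ => d) := by
  rw [play, if_pos h]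
  rfl

lemma play_congr {r₁ r₂ : Fin ℓ → α} (i : Fin ℓ) (hB : ∀ j ≤ i, j ∈ B₁ ↔ j ∈ B₂)
    (hr : ∀ j ≤ i, r₁ j = r₂ j) : play B₁ σ d r₁ i = play B₂ σ d r₂ i := by
  induction i using WellFoundedLT.induction with
  | _ i ih =>
    by_cases hi : i ∈ B₁
    · rw [play_of_mem _ hi, play_of_mem _ ((hB i le_rfl).1 hi)]
      congr 1
      ext j
      by_cases hj : j < i
      · simp only [splice, if_pos hj]
        exact ih j hj (fun k hk => hB k (hk.trans hj.le)) (fun k hk => hr k (hk.trans hj.le))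
      · simp only [splice, if_neg hj]
    · rw [play_of_not_mem _ hi, play_of_not_mem _ (mt (hB i le_rfl).2 hi), hr i le_rfl]

lemma play_singleton (σ : Fin ℓ → (Fin ℓ → α) → α) (d : α) (i : Fin ℓ) (r : Fin ℓ → α) :
    play {i} σ d r = Function.update r i (σ i (splice i r fun _ => d)) := by
  ext j
  by_cases hj : j = i
  · subst hj
    rw [play_of_mem r (mem_singleton_self j), Function.update_self]
    congr 1
    ext k
    by_cases hk : k < j
    · simp only [splice, if_pos hk]
      exact play_of_not_mem r (by simpa using hk.ne)
    · simp only [splice, if_neg hk]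
  · rw [Function.update_of_ne hj, play_of_not_mem r (by simpa using hj)]

end Play

section Hybrid

variable {B : Finset (Fin ℓ)} {σ : Fin ℓ → (Fin ℓ → Bool) → Bool}

def hybrid (B : Finset (Fin ℓ)) (σ : Fin ℓ → (Fin ℓ → Bool) → Bool) (m : ℕ)
    (r : Fin ℓ → Bool) : Fin ℓ → Bool :=
  play (B.filter fun j => (j : ℕ) < m) σ false r

lemma hybrid_zero (r : Fin ℓ → Bool) : hybrid B σ 0 r = r :=
  funext fun _ => play_of_not_mem r (by simp)

lemma hybrid_len (r : Fin ℓ → Bool) : hybrid B σ ℓ r = play B σ false r := by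
  rw [hybrid, filter_true_of_mem fun j _ => j.2]

lemma hybrid_of_le {m : ℕ} (r : Fin ℓ → Bool) {j : Fin ℓ} (h : m ≤ j) : hybrid B σ m r j = r j :=
  play_of_not_mem r (by simp [h])

lemma hybrid_eq_splice (i : Fin ℓ) {p r : Fin ℓ → Bool} (hr : r ∈ cylinder i p) :
    hybrid B σ i r = splice i (hybrid B σ i p) r := by
  ext j
  by_cases hj : j < i
  · simp only [splice, if_pos hj]
    exact play_congr j (fun _ _ => Iff.rfl)
      fun k hk => mem_cylinder.mp hr k (lt_of_le_of_lt hk hj)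
  · simp only [splice, if_neg hj]
    exact hybrid_of_le r (not_lt.mp hj)

lemma hybrid_succ_of_not_mem {i : Fin ℓ} (hi : i ∉ B) : hybrid B σ (i + 1) = hybrid B σ i := by
  have hfilter :
      (B.filter fun j : Fin ℓ => (j : ℕ) < i + 1) = B.filter fun j : Fin ℓ => (j : ℕ) < i := by
    refine filter_congr fun j hj => ?_
    have : (j : ℕ) ≠ i := Fin.val_ne_of_ne (ne_of_mem_of_not_mem hj hi)
    omega
  unfold hybrid
  rw [hfilter]

lemma hybrid_succ_of_mem {i : Fin ℓ} (hi : i ∈ B) (r : Fin ℓ → Bool) :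
    hybrid B σ (i + 1) r
      = Function.update (hybrid B σ i r) i (σ i (splice i (hybrid B σ i r) fun _ => false)) := by
  have hlt : ∀ j < i, hybrid B σ (i + 1) r j = hybrid B σ i r j := fun j hj =>
    play_congr j (fun k hk => by
      have : (k : ℕ) < i := lt_of_le_of_lt hk hj
      simp only [mem_filter]
      exact and_congr_right fun _ => by omega) fun _ _ => rfl
  ext j
  rcases lt_trichotomy j i with hj | rfl | hj
  · rw [hlt j hj, Function.update_of_ne hj.ne]
  · rw [Function.update_self, hybrid, play_of_mem r (mem_filter.mpr ⟨hi, Nat.lt_succ_self _⟩)]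
    congr 1
    ext k
    by_cases hk : k < j
    · simp only [splice, if_pos hk]
      exact hlt k hk
    · simp only [splice, if_neg hk]
  · rw [Function.update_of_ne hj.ne', hybrid_of_le r (Nat.succ_le_of_lt hj),
      hybrid_of_le r hj.le]

end Hybrid

lemma abs_condExpDiff_le_maxOI (f : (Fin ℓ → Bool) → Bool) (i : Fin ℓ) (p : Fin ℓ → Bool) :
    |condExpDiff f i p| ≤ maxOI f i :=
  le_ciSup (Set.finite_range fun p => |condExpDiff f i p|).bddAbove p

lemma abs_sum_boolSign_mul_condExpDiff_le (f : (Fin ℓ → Bool) → Bool) (i : Fin ℓ)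
    (s : (Fin ℓ → Bool) → Bool) (q : (Fin ℓ → Bool) → Fin ℓ → Bool) :
    |∑ p, boolSign (s p) * condExpDiff f i (q p)| ≤ 2 ^ ℓ * maxOI f i :=
  calc _ ≤ ∑ p, |boolSign (s p) * condExpDiff f i (q p)| := abs_sum_le_sum_abs _ _
    _ ≤ ∑ _p : Fin ℓ → Bool, maxOI f i := sum_le_sum fun p _ => by
        rw [abs_boolSign_mul]
        exact abs_condExpDiff_le_maxOI f i _
    _ = 2 ^ ℓ * maxOI f i := by simp

lemma abs_sum_hybrid_succ_sub_le (f : (Fin ℓ → Bool) → Bool) (B : Finset (Fin ℓ))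
    (σ : Fin ℓ → (Fin ℓ → Bool) → Bool) (i : Fin ℓ) :
    |∑ r, b2r (f (hybrid B σ (i + 1) r)) - ∑ r, b2r (f (hybrid B σ i r))|
      ≤ 2 ^ ℓ * if i ∈ B then maxOI f i / 2 else 0 := by
  by_cases hi : i ∈ B
  · rw [if_pos hi, ← sum_sub_distrib]
    simp only [hybrid_succ_of_mem hi]
    rw [sum_update_online f i (hybrid B σ i) (fun _ _ hr => hybrid_eq_splice i hr)
      (fun y => σ i (splice i y fun _ => false))
      (fun _ _ hy => by rw [splice_eq_of_mem_cylinder hy]), abs_div, abs_two]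
    linarith [abs_sum_boolSign_mul_condExpDiff_le f i
      (fun p => σ i (splice i (hybrid B σ i p) fun _ => false)) (hybrid B σ i)]
  · simp [hi, hybrid_succ_of_not_mem hi]

lemma abs_meanPlay_sub_meanF_le (f : (Fin ℓ → Bool) → Bool) (B : Finset (Fin ℓ))
    (σ : Fin ℓ → (Fin ℓ → Bool) → Bool) :
    |meanPlay f B σ - meanF f| ≤ ∑ i ∈ B, maxOI f i / 2 := by
  set S : ℕ → ℝ := fun m => ∑ r, b2r (f (hybrid B σ m r))
  have htelescope : meanPlay f B σ - meanF f = (∑ i : Fin ℓ, (S (i + 1) - S i)) / 2 ^ ℓ := by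
    rw [Fin.sum_univ_eq_sum_range (fun k => S (k + 1) - S k), sum_range_sub, meanPlay, meanF,
      div_sub_div_same]
    simp only [S, hybrid_len, hybrid_zero]
  have hpow : (0 : ℝ) < 2 ^ ℓ := by positivity
  rw [htelescope, abs_div, abs_of_pos hpow, div_le_iff₀ hpow]
  calc |∑ i : Fin ℓ, (S (i + 1) - S i)|
      ≤ ∑ i : Fin ℓ, |S (i + 1) - S i| := abs_sum_le_sum_abs _ _
    _ ≤ ∑ i : Fin ℓ, 2 ^ ℓ * if i ∈ B then maxOI f i / 2 else 0 :=
        sum_le_sum fun i _ => abs_sum_hybrid_succ_sub_le f B σ i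
    _ = (∑ i ∈ B, maxOI f i / 2) * 2 ^ ℓ := by
        rw [← mul_sum, sum_ite_mem, univ_inter, mul_comm]

lemma meanPlay_singleton_sub_meanF (f : (Fin ℓ → Bool) → Bool) (i : Fin ℓ)
    (σ : Fin ℓ → (Fin ℓ → Bool) → Bool) :
    meanPlay f {i} σ - meanF f
      = (∑ p, boolSign (σ i (splice i p fun _ => false)) * condExpDiff f i p) / 2 / 2 ^ ℓ := by
  rw [meanPlay, meanF, div_sub_div_same, ← sum_sub_distrib]
  simp only [play_singleton]
  exact congrArg (· / 2 ^ ℓ) (sum_update_online f i id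
    (fun _ r hr => by rw [id, id, ← splice_eq_of_mem_cylinder hr, splice_self])
    (fun y => σ i (splice i y fun _ => false))
    (fun _ _ hy => by rw [splice_eq_of_mem_cylinder hy]))

lemma isGreatest_abs_meanPlay_singleton_sub_meanF (f : (Fin ℓ → Bool) → Bool) (i : Fin ℓ) :
    IsGreatest {a : ℝ | ∃ σ : Fin ℓ → (Fin ℓ → Bool) → Bool, a = |meanPlay f {i} σ - meanF f|}
      (oI f i / 2) := by
  have hoI : oI f i / 2 = (∑ p, |condExpDiff f i p|) / 2 / 2 ^ ℓ := by
    rw [oI, div_right_comm]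
    rfl
  refine ⟨⟨fun _ q => decide (0 ≤ condExpDiff f i q), ?_⟩, ?_⟩
  · have hsign (p : Fin ℓ → Bool) :
        boolSign (decide (0 ≤ condExpDiff f i (splice i p fun _ => false))) * condExpDiff f i p
          = |condExpDiff f i p| := by
      rw [condExpDiff_of_mem_cylinder f (splice_mem_cylinder i p _), boolSign_decide_mul]
    rw [meanPlay_singleton_sub_meanF, hoI, sum_congr rfl fun p _ => hsign p,
      abs_of_nonneg (by positivity)]
  · rintro a ⟨σ, rfl⟩
    rw [meanPlay_singleton_sub_meanF, hoI, abs_div, abs_div, abs_two,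
      abs_of_pos (by positivity : (0 : ℝ) < 2 ^ ℓ)]
    gcongr ?_ / 2 / _
    exact (abs_sum_le_sum_abs _ _).trans (sum_congr rfl fun p _ => abs_boolSign_mul _ _).le

end OnlineInfluence

/-- The online influence of a coalition `B` is at most the sum over `B` of the individual
online influences taken over worst-case restrictions (prefixes); and for a singleton
coalition `{i}` the online influence of the coalition is exactly `oI_i[f]/2`. -/
theorem coalition_oI {ℓ : ℕ} (f : (Fin ℓ → Bool) → Bool) :
    (∀ (B : Finset (Fin ℓ)) (σ : Fin ℓ → (Fin ℓ → Bool) → Bool),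
      |meanPlay f B σ - meanF f| ≤ ∑ i ∈ B, maxOI f i / 2) ∧
    (∀ i : Fin ℓ, IsGreatest
      {a : ℝ | ∃ σ : Fin ℓ → (Fin ℓ → Bool) → Bool, a = |meanPlay f {i} σ - meanF f|}
      (oI f i / 2)) :=
  ⟨OnlineInfluence.abs_meanPlay_sub_meanF_le f,
    OnlineInfluence.isGreatest_abs_meanPlay_singleton_sub_meanF f⟩
end

section
/- For every protocol in which ℓ players sequentially broadcast single bits (each bad player's bit an arbitrary function of all previously broadcast bits, good players' bits uniform and independent), and every Boolean output function f: {0,1}^ℓ → {0,1}, a coalition of b bad players can bias the outcome: there is a choice of b positions and an online strategy making |Pr[f(X) = 1] - Pr[f(U_ℓ) = 1]| ≥ b/(2ℓ) · min(Pr[f(U)=1], Pr[f(U)=0]) — in particular, for balanced f, some outcome occurs with probability at least 1/2 + b/(2ℓ). Consequently, there is no ε-extractor for uniform (g, ℓ, 1)-oNOSF sources with ε < (ℓ-g)/(2ℓ). -/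
open Finset

/-!
Say `μ = meanF f ≤ 1/2`; otherwise replace `f` by `!f`. The Doob martingale of `f` along the
coordinates telescopes from `μ` to `f`, and its increments at step `i` add up to `oI f i / 2`,
so the online influences add up to at least `Var((-1)^f) = 4μ(1-μ) ≥ 2μ`. An adversary who takes
over coordinate `i` and always plays the bit with the smaller conditional expectation lowers the
mean by exactly `oI f i / 2`. Coordinates the coalition already controls have no influence, so
one of the `ℓ - b` others has influence at least `2μ/(ℓ-b)`, and taking it over multiplies the
mean by at most `(ℓ-b-1)/(ℓ-b)`. After `b` greedy steps the mean is at most `(1 - b/ℓ) μ`.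
-/

open Function

section Play

variable {n : ℕ} {α : Type*} {B : Finset (Fin n)} {σ : Fin n → (Fin n → α) → α} {d : α}

lemma play_of_notMem {i : Fin n} (hi : i ∉ B) (r : Fin n → α) : play B σ d r i = r i := by
  rw [play, if_neg hi]

lemma play_empty (r : Fin n → α) : play ∅ σ d r = r :=
  funext fun i => play_of_notMem (notMem_empty i) r

lemma dependsOn_play : DependsOn (play B σ d) (↑B)ᶜ := by
  intro r s hrs
  funext i
  induction i using WellFoundedLT.induction with
  | _ i ih =>
    rw [play, play]
    split_ifs with hi
    · congr 1
      funext j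
      split_ifs with hj
      · exact ih j hj
      · rfl
    · exact hrs i hi

lemma play_insert {i : Fin n} (hi : i ∉ B) (γ : (Fin n → α) → α) (r : Fin n → α) :
    play (insert i B) (update σ i γ) d r
      = play B σ d (update r i (γ fun j =>
          if (j : ℕ) < i then play (insert i B) (update σ i γ) d r j else d)) := by
  funext k
  induction k using WellFoundedLT.induction with
  | _ k ih =>
    by_cases hki : k = i
    · subst hki
      rw [play, play_of_notMem hi, if_pos (mem_insert_self k B), update_self, update_self]
      rfl
    by_cases hk : k ∈ B
    · rw [play, play, if_pos (mem_insert_of_mem hk), if_pos hk, update_of_ne hki]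
      congr 1
      funext j
      split_ifs with hj
      · exact ih j hj
      · rfl
    · rw [play_of_notMem (by simp [hki, hk]), play_of_notMem hk, update_of_ne hki]

end Play

lemma sum_comp_xor {ι M : Type*} [Fintype ι] [DecidableEq ι] [AddCommMonoid M]
    (d : ι → Bool) (h : (ι → Bool) → M) :
    ∑ y : ι → Bool, h (fun j => xor (y j) (d j)) = ∑ y, h y :=
  Equiv.sum_comp (Involutive.toPerm (fun (y : ι → Bool) j => xor (y j) (d j))
    fun y => by simp) h

lemma sum_comp_update {ι : Type*} [Fintype ι] [DecidableEq ι] (i : ι) (h : (ι → Bool) → ℝ)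
    (b : Bool) :
    ∑ r, h (update r i b) = 2 * ∑ r, if r i = b then h r else 0 := by
  have hflip : ∑ r, (if r i = b then 0 else h (update r i b))
      = ∑ r, if r i = b then h (update r i b) else 0 := by
    rw [← sum_comp_xor (fun j => decide (j = i))]
    refine sum_congr rfl fun r _ => ?_
    have hupd : update (fun j => xor (r j) (decide (j = i))) i b = update r i b := by
      ext j; by_cases hj : j = i <;> simp [hj]
    cases hb : r i <;> cases b <;> simp [hb, hupd]
  have hfix : ∀ r, (if r i = b then h (update r i b) else 0) = if r i = b then h r else 0 :=
    fun r => by split_ifs with hr <;> [rw [← hr, update_eq_self]; rfl]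
  calc ∑ r, h (update r i b)
      = ∑ r, ((if r i = b then h (update r i b) else 0)
          + if r i = b then 0 else h (update r i b)) :=
        sum_congr rfl fun r _ => by split_ifs <;> simp
    _ = 2 * ∑ r, if r i = b then h r else 0 := by
        rw [sum_add_distrib, hflip, ← two_mul, sum_congr rfl fun r _ => hfix r]

namespace BenOrLinial

variable {ℓ : ℕ}

lemma b2r_nonneg (b : Bool) : 0 ≤ b2r b := by
  cases b <;> simp [b2r]

lemma b2r_le_one (b : Bool) : b2r b ≤ 1 := by
  cases b <;> simp [b2r]

lemma b2r_not (b : Bool) : b2r (!b) = 1 - b2r b := by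
  cases b <;> simp [b2r]

lemma sum_one_eq_two_pow : ∑ _x : Fin ℓ → Bool, (1 : ℝ) = 2 ^ ℓ := by
  simp

lemma meanF_nonneg (f : (Fin ℓ → Bool) → Bool) : 0 ≤ meanF f :=
  div_nonneg (sum_nonneg fun x _ => b2r_nonneg (f x)) (by positivity)

lemma meanF_le_one (f : (Fin ℓ → Bool) → Bool) : meanF f ≤ 1 := by
  rw [meanF, div_le_one (by positivity), ← sum_one_eq_two_pow]
  exact sum_le_sum fun x _ => b2r_le_one (f x)

lemma meanF_not (f : (Fin ℓ → Bool) → Bool) : meanF (fun x => !f x) = 1 - meanF f := by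
  simp only [meanF, b2r_not, sum_sub_distrib, sum_one_eq_two_pow]
  field_simp

lemma meanPlay_not (f : (Fin ℓ → Bool) → Bool) (B : Finset (Fin ℓ))
    (σ : Fin ℓ → (Fin ℓ → Bool) → Bool) :
    meanPlay (fun x => !f x) B σ = 1 - meanPlay f B σ :=
  meanF_not fun r => f (play B σ false r)

lemma varE_eq (f : (Fin ℓ → Bool) → Bool) : varE f = 4 * meanF f * (1 - meanF f) := by
  have hsign : ∀ x, esign f x = 1 - 2 * b2r (f x) := fun x => by
    unfold esign b2r; split_ifs <;> norm_num
  simp only [varE, meanF, hsign, sum_sub_distrib, ← mul_sum, sum_one_eq_two_pow]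
  have hsq : ∀ x, (1 - 2 * b2r (f x)) ^ 2 = 1 := fun x => by
    cases f x <;> norm_num [b2r]
  simp only [hsq, sum_one_eq_two_pow]
  field_simp
  ring

section Influence

variable {F : (Fin ℓ → Bool) → Bool} {B : Finset (Fin ℓ)} {i : Fin ℓ}

lemma condExp_congr (hF : DependsOn F (↑B)ᶜ) {p p' : Fin ℓ → Bool}
    (hp : ∀ j < i, j ∉ B → p j = p' j) (c : Bool) : condExp F i p c = condExp F i p' c := by
  -- translate the summation variable by the difference of the two prefixes
  set d : Fin ℓ → Bool := fun j => decide (j < i) && xor (p j) (p' j)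
  rw [condExp, condExp, ← sum_comp_xor d]
  congr 1
  refine sum_congr rfl fun y _ => ?_
  have hFy : F (fun j => xor (y j) (d j)) = F y := hF fun j hj => by
    by_cases hji : j < i
    · simp [d, hji, hp j hji hj]
    · simp [d, hji]
  have hprefix : (∀ j < i, xor (y j) (d j) = p j) ↔ ∀ j < i, y j = p' j := by
    refine forall₂_congr fun j hji => ?_
    rw [show d j = xor (p j) (p' j) by simp [d, hji]]
    cases y j <;> cases p j <;> cases p' j <;> decide
  simp [hFy, hprefix, d]

lemma condExp_true_eq_false (hF : DependsOn F (↑B)ᶜ) (hi : i ∈ B) (p : Fin ℓ → Bool) :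
    condExp F i p true = condExp F i p false := by
  set d : Fin ℓ → Bool := fun j => decide (j = i)
  rw [condExp, condExp, ← sum_comp_xor d]
  congr 1
  refine sum_congr rfl fun y _ => ?_
  have hFy : F (fun j => xor (y j) (d j)) = F y := hF fun j hj => by
    have : j ≠ i := fun h => hj (h ▸ hi)
    simp [d, this]
  have hprefix : (∀ j < i, xor (y j) (d j) = p j) ↔ ∀ j < i, y j = p j :=
    forall₂_congr fun j hji => by simp [d, hji.ne]
  simp [hFy, hprefix, d]

lemma oI_eq_zero_of_mem (hF : DependsOn F (↑B)ᶜ) (hi : i ∈ B) : oI F i = 0 := by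
  simp [oI, condExp_true_eq_false hF hi]

variable (F) in
noncomputable def prefixAvg (t : ℕ) (x : Fin ℓ → Bool) : ℝ :=
  (∑ y, if ∀ j : Fin ℓ, (j : ℕ) < t → y j = x j then b2r (F y) else 0) / 2 ^ (ℓ - t)

lemma prefixAvg_zero (x : Fin ℓ → Bool) : prefixAvg F 0 x = meanF F := by
  simp [prefixAvg, meanF]

lemma prefixAvg_length (x : Fin ℓ → Bool) : prefixAvg F ℓ x = b2r (F x) := by
  simp [prefixAvg, ← funext_iff]

lemma prefixAvg_val (x : Fin ℓ → Bool) :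
    prefixAvg F i x = (condExp F i x true + condExp F i x false) / 2 := by
  have hpow : (2 : ℝ) ^ (ℓ - i) = 2 * 2 ^ (ℓ - i - 1) := by
    rw [← pow_succ']; congr 1; omega
  rw [prefixAvg, condExp, condExp, ← add_div, ← sum_add_distrib, hpow, div_div, mul_comm]
  congr 1
  refine sum_congr rfl fun y _ => ?_
  cases y i <;> simp

lemma prefixAvg_succ (x : Fin ℓ → Bool) :
    prefixAvg F (i + 1) x = condExp F i x (x i) := by
  have hagree : ∀ y : Fin ℓ → Bool,
      (∀ j : Fin ℓ, (j : ℕ) < i + 1 → y j = x j) ↔ (∀ j < i, y j = x j) ∧ y i = x i := by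
    intro y
    simp only [Nat.lt_succ_iff_lt_or_eq, or_imp, forall_and, Fin.lt_def, ← Fin.ext_iff,
      forall_eq]
  simp only [prefixAvg, condExp, hagree, Nat.sub_sub]

lemma abs_prefixAvg_succ_sub (x : Fin ℓ → Bool) :
    |prefixAvg F (i + 1) x - prefixAvg F i x| = |condExp F i x true - condExp F i x false| / 2 := by
  rw [prefixAvg_succ, prefixAvg_val]
  have half : ∀ a b : ℝ, |a - (a + b) / 2| = |a - b| / 2 := fun a b => by
    rw [show a - (a + b) / 2 = (a - b) / 2 by ring, abs_div, abs_two]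
  cases x i
  · rw [add_comm, half, abs_sub_comm]
  · rw [half]

lemma sum_abs_b2r_sub_meanF :
    ∑ x, |b2r (F x) - meanF F| = 2 ^ ℓ * (2 * meanF F * (1 - meanF F)) := by
  have hμ0 := meanF_nonneg F
  have hμ1 := meanF_le_one F
  have hpoint : ∀ x, |b2r (F x) - meanF F| = meanF F + (1 - 2 * meanF F) * b2r (F x) :=
    fun x => by
      cases F x
      · rw [b2r, if_neg Bool.false_ne_true, zero_sub, abs_neg, abs_of_nonneg hμ0]; ring
      · rw [b2r, if_pos rfl, abs_of_nonneg (by linarith)]; ring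
  have hsum : ∑ x, b2r (F x) = 2 ^ ℓ * meanF F := by
    rw [meanF, mul_div_cancel₀ _ (by positivity)]
  simp only [hpoint, sum_add_distrib, ← mul_sum, hsum, sum_const, card_univ,
    Fintype.card_fun, Fintype.card_bool, Fintype.card_fin, nsmul_eq_mul]
  push_cast
  ring

lemma sum_abs_b2r_sub_meanF_le_totalOI :
    ∑ x, |b2r (F x) - meanF F| ≤ 2 ^ ℓ * totalOI F / 2 := by
  have hstep : ∀ i : Fin ℓ,
      ∑ x, |prefixAvg F (i + 1) x - prefixAvg F i x| = 2 ^ ℓ * oI F i / 2 := fun i => by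
    simp only [abs_prefixAvg_succ_sub, ← sum_div, oI]
    field_simp
  calc ∑ x, |b2r (F x) - meanF F|
      = ∑ x, |∑ t ∈ range ℓ, (prefixAvg F (t + 1) x - prefixAvg F t x)| := by
        refine sum_congr rfl fun x _ => ?_
        rw [sum_range_sub (prefixAvg F · x), prefixAvg_length, prefixAvg_zero]
    _ ≤ ∑ x, ∑ t ∈ range ℓ, |prefixAvg F (t + 1) x - prefixAvg F t x| :=
        sum_le_sum fun x _ => abs_sum_le_sum_abs _ _
    _ = ∑ i : Fin ℓ, ∑ x, |prefixAvg F (i + 1) x - prefixAvg F i x| := by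
        rw [sum_comm, Fin.sum_univ_eq_sum_range
          (fun t => ∑ x, |prefixAvg F (t + 1) x - prefixAvg F t x|)]
    _ = 2 ^ ℓ * totalOI F / 2 := by
        simp only [hstep, totalOI, ← sum_div, ← mul_sum]

theorem varE_le_totalOI : varE F ≤ totalOI F := by
  have h := sum_abs_b2r_sub_meanF_le_totalOI (F := F)
  rw [sum_abs_b2r_sub_meanF] at h
  rw [varE_eq]
  have : (0 : ℝ) < 2 ^ ℓ := by positivity
  nlinarith

variable (i) in
lemma card_agree_below (r : Fin ℓ → Bool) :
    #{p : Fin ℓ → Bool | ∀ j < i, r j = p j} = 2 ^ (ℓ - i) := by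
  have hpi : ({p : Fin ℓ → Bool | ∀ j < i, r j = p j} : Finset _)
      = Fintype.piFinset fun j => if j < i then {r j} else univ := by
    ext p
    simp only [mem_filter, mem_univ, true_and, Fintype.mem_piFinset]
    refine forall_congr' fun j => ?_
    by_cases h : j < i
    · rw [if_pos h, mem_singleton]; exact ⟨fun H => (H h).symm, fun H _ => H.symm⟩
    · simp [h]
  rw [hpi, Fintype.card_piFinset]
  simp only [apply_ite card, card_singleton, card_univ, Fintype.card_bool]
  rw [prod_ite, prod_const_one, one_mul, prod_const, ← Fin.card_Ici i]
  congr 2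
  ext j
  simp

variable (i) in
lemma sum_sum_agree_below (h : (Fin ℓ → Bool) → ℝ) :
    ∑ p : Fin ℓ → Bool, ∑ r, (if ∀ j < i, r j = p j then h r else 0) = 2 ^ (ℓ - i) * ∑ r, h r := by
  rw [sum_comm, mul_sum]
  refine sum_congr rfl fun r _ => ?_
  rw [← sum_filter, sum_const, card_agree_below, nsmul_eq_mul]
  push_cast
  ring

lemma two_pow_mul_condExp (p : Fin ℓ → Bool) (b : Bool) :
    2 ^ (ℓ - i) * condExp F i p b
      = 2 * ∑ y, if (∀ j < i, y j = p j) ∧ y i = b then b2r (F y) else 0 := by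
  have hpow : (2 : ℝ) ^ (ℓ - i) = 2 * 2 ^ (ℓ - i - 1) := by
    rw [← pow_succ']; congr 1; omega
  rw [condExp, hpow, mul_assoc, mul_div_cancel₀ _ (by positivity)]

lemma sum_b2r_update_eq_sum_condExp (γ : (Fin ℓ → Bool) → Bool)
    (hγ : ∀ r p, (∀ j < i, r j = p j) → γ r = γ p) :
    ∑ r, b2r (F (update r i (γ r))) = ∑ p, condExp F i p (γ p) := by
  refine mul_left_cancel₀ (pow_ne_zero (ℓ - i) two_ne_zero : (2 : ℝ) ^ (ℓ - i) ≠ 0) ?_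
  rw [← sum_sum_agree_below i, mul_sum]
  refine sum_congr rfl fun p _ => ?_
  have hagree : ∀ r c, (∀ j < i, update r i c j = p j) ↔ ∀ j < i, r j = p j := fun r c =>
    forall₂_congr fun j hj => by rw [update_of_ne hj.ne]
  calc ∑ r, (if ∀ j < i, r j = p j then b2r (F (update r i (γ r))) else 0)
      = ∑ r, (fun y => if ∀ j < i, y j = p j then b2r (F y) else 0) (update r i (γ p)) := by
        refine sum_congr rfl fun r _ => ?_
        simp only [hagree]
        split_ifs with hr
        · rw [hγ r p hr]
        · rfl
    _ = 2 * ∑ r, if r i = γ p then (if ∀ j < i, r j = p j then b2r (F r) else 0) else 0 :=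
        sum_comp_update i (fun y => if ∀ j < i, y j = p j then b2r (F y) else 0) (γ p)
    _ = 2 ^ (ℓ - i) * condExp F i p (γ p) := by
        rw [two_pow_mul_condExp]
        congr 1
        exact sum_congr rfl fun y _ => by split_ifs <;> simp_all

variable (F i) in
noncomputable def greedyBit (p : Fin ℓ → Bool) : Bool :=
  decide (condExp F i p true < condExp F i p false)

lemma greedyBit_congr (hF : DependsOn F (↑B)ᶜ) {p p' : Fin ℓ → Bool}
    (h : ∀ j < i, j ∉ B → p j = p' j) : greedyBit F i p = greedyBit F i p' := by
  simp only [greedyBit, condExp_congr hF h]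

lemma condExp_greedyBit (p : Fin ℓ → Bool) :
    condExp F i p (greedyBit F i p) = min (condExp F i p true) (condExp F i p false) := by
  by_cases h : condExp F i p true < condExp F i p false
  · simp [greedyBit, h, min_eq_left h.le]
  · simp [greedyBit, h, min_eq_right (not_lt.mp h)]

variable (i) in
lemma sum_b2r_eq_sum_condExp :
    ∑ r, b2r (F r) = ∑ p, (condExp F i p true + condExp F i p false) / 2 := by
  have hconst := fun b => sum_b2r_update_eq_sum_condExp (F := F) (i := i) (fun _ => b)
    fun _ _ _ => rfl
  have hupd : ∀ b, ∑ r, b2r (F (update r i b)) = 2 * ∑ r, if r i = b then b2r (F r) else 0 :=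
    sum_comp_update i (fun y => b2r (F y))
  rw [← sum_div, sum_add_distrib, ← hconst, ← hconst, hupd, hupd, ← mul_add,
    ← sum_add_distrib]
  field_simp
  exact sum_congr rfl fun r _ => by cases r i <;> simp

theorem meanF_greedy :
    meanF (fun r => F (update r i (greedyBit F i r))) = meanF F - oI F i / 2 := by
  have hmin : ∀ a b : ℝ, min a b = (a + b) / 2 - |a - b| / 2 := fun a b => by
    linarith [max_sub_min_eq_abs' a b, min_add_max a b]
  rw [meanF, meanF, oI, sum_b2r_update_eq_sum_condExp _ fun r p h =>
    greedyBit_congr (B := ∅) (by simpa using dependsOn_univ F) fun j hj _ => h j hj,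
    sum_b2r_eq_sum_condExp i]
  simp only [condExp_greedyBit, hmin, sum_sub_distrib, ← sum_div]
  ring

end Influence

lemma exists_notMem_oI_ge {F : (Fin ℓ → Bool) → Bool} {B : Finset (Fin ℓ)}
    (hF : DependsOn F (↑B)ᶜ) (hB : #B < ℓ) :
    ∃ i ∉ B, varE F / (ℓ - #B) ≤ oI F i := by
  have hcard : #Bᶜ = ℓ - #B := by rw [card_compl, Fintype.card_fin]
  have hpos : (0 : ℝ) < ℓ - #B := by
    rw [sub_pos]; exact_mod_cast hB
  have hsum : ∑ _i ∈ Bᶜ, varE F / (ℓ - #B) ≤ ∑ i ∈ Bᶜ, oI F i := by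
    rw [sum_const, hcard, nsmul_eq_mul, Nat.cast_sub hB.le, mul_div_cancel₀ _ hpos.ne',
      sum_subset (subset_univ _) fun i _ hi => oI_eq_zero_of_mem hF (by simpa using hi)]
    exact varE_le_totalOI
  obtain ⟨i, hi, hle⟩ := exists_le_of_sum_le (by rw [← card_pos, hcard]; omega) hsum
  exact ⟨i, by simpa using hi, hle⟩

lemma meanPlay_insert_greedyBit (f : (Fin ℓ → Bool) → Bool) {B : Finset (Fin ℓ)}
    (σ : Fin ℓ → (Fin ℓ → Bool) → Bool) {i : Fin ℓ} (hi : i ∉ B) :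
    meanPlay f (insert i B) (update σ i (greedyBit (fun r => f (play B σ false r)) i))
      = meanPlay f B σ - oI (fun r => f (play B σ false r)) i / 2 := by
  set F := fun r => f (play B σ false r)
  have hF : DependsOn F (↑B)ᶜ := fun r s h => congrArg f (dependsOn_play h)
  have hplay : ∀ r, f (play (insert i B) (update σ i (greedyBit F i)) false r)
      = F (update r i (greedyBit F i r)) := fun r => by
    rw [play_insert hi]
    refine congrArg (fun c => F (update r i c)) (greedyBit_congr hF fun j hj hjB => ?_)
    rw [if_pos (Fin.lt_def.mp hj), play_of_notMem (by simp [hj.ne, hjB])]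
  simp only [meanPlay, hplay]
  exact meanF_greedy (F := F)

lemma sub_half_le_mul_of_le {m v k : ℝ} (hk : 0 < k) (hm0 : 0 ≤ m) (hm : m ≤ 1 / 2)
    (hv : 4 * m * (1 - m) / k ≤ v) : m - v / 2 ≤ m * ((k - 1) / k) := by
  rw [div_le_iff₀ hk] at hv
  rw [mul_div_assoc', le_div_iff₀ hk]
  nlinarith [mul_nonneg hm0 (by linarith : (0 : ℝ) ≤ 1 - 2 * m)]

theorem exists_meanPlay_le (f : (Fin ℓ → Bool) → Bool) (hf : meanF f ≤ 1 / 2) {b : ℕ}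
    (hb : b ≤ ℓ) :
    ∃ (B : Finset (Fin ℓ)) (σ : Fin ℓ → (Fin ℓ → Bool) → Bool),
      #B = b ∧ meanPlay f B σ ≤ (1 - b / ℓ) * meanF f := by
  induction b with
  | zero =>
    refine ⟨∅, fun _ _ => false, card_empty, ?_⟩
    simp [meanPlay, play_empty, meanF]
  | succ b ih =>
    obtain ⟨B, σ, hB, hle⟩ := ih (by omega)
    set F := fun r => f (play B σ false r)
    obtain ⟨i, hi, hoI⟩ := exists_notMem_oI_ge (F := F)
      (fun r s h => congrArg f (dependsOn_play h)) (by omega)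
    rw [hB, varE_eq] at hoI
    refine ⟨insert i B, update σ i (greedyBit F i), by rw [card_insert_of_notMem hi, hB], ?_⟩
    have hbℓ : (b : ℝ) + 1 ≤ ℓ := by exact_mod_cast hb
    have hk : (0 : ℝ) < ℓ - b := by linarith
    have hF_half : meanF F ≤ 1 / 2 := hle.trans <| by
      nlinarith [meanF_nonneg f, div_nonneg (Nat.cast_nonneg b) (Nat.cast_nonneg (α := ℝ) ℓ)]
    calc meanPlay f (insert i B) (update σ i (greedyBit F i))
        = meanF F - oI F i / 2 := meanPlay_insert_greedyBit f σ hi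
      _ ≤ meanF F * ((ℓ - b - 1) / (ℓ - b)) :=
          sub_half_le_mul_of_le hk (meanF_nonneg F) hF_half hoI
      _ ≤ (1 - b / ℓ) * meanF f * ((ℓ - b - 1) / (ℓ - b)) :=
          mul_le_mul_of_nonneg_right hle (div_nonneg (by linarith) hk.le)
      _ = (1 - ↑(b + 1) / ℓ) * meanF f := by
          have hℓ : (ℓ : ℝ) ≠ 0 := by linarith
          field_simp
          push_cast
          ring

lemma bias_of_le_mul {β μ m : ℝ} (hβ : β ≤ 1) (hμ : μ ≤ 1 / 2)
    (hm : m ≤ (1 - β) * μ) : β * min μ (1 - μ) ≤ |m - μ| ∧ β / 2 ≤ |m - 1 / 2| := by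
  rw [min_eq_left (by linarith)]
  constructor
  · rw [abs_sub_comm]; exact le_trans (by linarith) (le_abs_self _)
  · rw [abs_sub_comm]; exact le_trans (by nlinarith) (le_abs_self _)

theorem exists_strategy_biased (f : (Fin ℓ → Bool) → Bool) {b : ℕ} (hb : b ≤ ℓ) :
    ∃ (B : Finset (Fin ℓ)) (σ : Fin ℓ → (Fin ℓ → Bool) → Bool), #B = b ∧
      b / ℓ * min (meanF f) (1 - meanF f) ≤ |meanPlay f B σ - meanF f| ∧
      b / (2 * ℓ) ≤ |meanPlay f B σ - 1 / 2| := by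
  have hβ : (b : ℝ) / ℓ ≤ 1 := div_le_one_of_le₀ (by exact_mod_cast hb) (Nat.cast_nonneg ℓ)
  rw [mul_comm 2, ← div_div]
  by_cases hf : meanF f ≤ 1 / 2
  · obtain ⟨B, σ, hB, hle⟩ := exists_meanPlay_le f hf hb
    exact ⟨B, σ, hB, bias_of_le_mul hβ hf hle⟩
  · have hnot : meanF (fun x => !f x) ≤ 1 / 2 := by rw [meanF_not]; linarith
    obtain ⟨B, σ, hB, hle⟩ := exists_meanPlay_le _ hnot hb
    have h := bias_of_le_mul hβ hnot hle
    rw [meanPlay_not, meanF_not, sub_sub_cancel, min_comm, sub_sub_sub_cancel_left,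
      abs_sub_comm, show 1 - meanPlay f B σ - 1 / 2 = -(meanPlay f B σ - 1 / 2) by ring,
      abs_neg] at h
    exact ⟨B, σ, hB, h⟩

end BenOrLinial

open BenOrLinial in
theorem benOrLinial_bias_general {ℓ : ℕ} (f : (Fin ℓ → Bool) → Bool) :
    (∀ b : ℕ, b ≤ ℓ → ∃ B : Finset (Fin ℓ), B.card = b ∧
      ∃ σ : Fin ℓ → (Fin ℓ → Bool) → Bool,
        (b : ℝ) / (2 * ℓ) * min (meanF f) (1 - meanF f) ≤ |meanPlay f B σ - meanF f|) ∧
    (∀ (g : ℕ) (ε : ℝ), g ≤ ℓ → 0 ≤ ε → ε < ((ℓ : ℝ) - g) / (2 * ℓ) →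
      ¬ (∀ B : Finset (Fin ℓ), B.card ≤ ℓ - g →
          ∀ σ : Fin ℓ → (Fin ℓ → Bool) → Bool, |meanPlay f B σ - 1 / 2| ≤ ε)) := by
  refine ⟨fun b hb => ?_, fun g ε hg _ hε hext => ?_⟩
  · obtain ⟨B, σ, hB, hbias, -⟩ := exists_strategy_biased f hb
    refine ⟨B, hB, σ, le_trans ?_ hbias⟩
    have hmin : 0 ≤ min (meanF f) (1 - meanF f) :=
      le_min (meanF_nonneg f) (sub_nonneg.mpr (meanF_le_one f))
    rw [mul_comm 2, ← div_div]
    exact mul_le_mul_of_nonneg_right (half_le_self (by positivity)) hmin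
  · obtain ⟨B, σ, hB, -, hbias⟩ := exists_strategy_biased f (Nat.sub_le ℓ g)
    have := hext B hB.le σ
    rw [Nat.cast_sub hg] at hbias
    linarith

/-- Ben-Or–Linial-type lower bound for one-round sequential bit protocols: any coalition of
`b` out of `ℓ` players can bias any Boolean output function by at least
`(b/(2ℓ)) · min(Pr[f=1], Pr[f=0])`; consequently there is no `ε`-extractor for uniform
`(g, ℓ, 1)`-oNOSF sources when `ε < (ℓ-g)/(2ℓ)`. -/
theorem benOrLinial_bias {ℓ : ℕ} (hℓ : 0 < ℓ) (f : (Fin ℓ → Bool) → Bool) :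
    (∀ b : ℕ, b ≤ ℓ → ∃ B : Finset (Fin ℓ), B.card = b ∧
      ∃ σ : Fin ℓ → (Fin ℓ → Bool) → Bool,
        (b : ℝ) / (2 * ℓ) * min (meanF f) (1 - meanF f) ≤ |meanPlay f B σ - meanF f|) ∧
    (∀ (g : ℕ) (ε : ℝ), g ≤ ℓ → 0 ≤ ε → ε < ((ℓ : ℝ) - g) / (2 * ℓ) →
      ¬ (∀ B : Finset (Fin ℓ), B.card ≤ ℓ - g →
          ∀ σ : Fin ℓ → (Fin ℓ → Bool) → Bool, |meanPlay f B σ - 1 / 2| ≤ ε)) :=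
  benOrLinial_bias_general f
end
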